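/- arXiv:1510.04471 — 8 statements merged into one kernel-verified Lean document; each statement's English description precedes it below -/
import Mathlib

section
/- For every nonempty closed set C in a real Banach space X and every n ∈ ℕ, the set L_n(C) is open in X; consequently L(C) = ⋂_{n=1}^∞ L_n(C) is a G_δ set. -/
open Metric Filter Topology

def LSet {X : Type*} [NormedAddCommGroup X] [NormedSpace ℝ X] (C : Set X) (n : ℕ) : Set X :=
  {x | x ∉ C ∧ ∃ f : X →L[ℝ] ℝ, ‖f‖ = 1 ∧
    (⨆ δ : {δ : ℝ // 0 < δ},
        sInf ((fun z => f (x - z)) '' (C ∩ Metric.closedBall x (Metric.infDist x C + δ.1))))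
      > (1 - (2 : ℝ) ^ (-(n : ℤ))) * Metric.infDist x C}

section Aux
variable {X : Type*} [NormedAddCommGroup X] [NormedSpace ℝ X] {C : Set X}

omit [NormedSpace ℝ X] in
lemma S_nonempty (hCne : C.Nonempty) (y : X) {δ : ℝ} (hδ : 0 < δ) :
    (C ∩ closedBall y (infDist y C + δ)).Nonempty := by
  obtain ⟨z, hzC, hz⟩ := (infDist_lt_iff hCne).1
    (lt_add_of_pos_right (infDist y C) hδ)
  exact ⟨z, hzC, by simpa [mem_closedBall, dist_comm] using hz.le⟩

lemma I_bddBelow (f : X →L[ℝ] ℝ) (w : X) (r : ℝ) :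
    BddBelow ((fun z => f (w - z)) '' (C ∩ closedBall w r)) := by
  refine ⟨-(‖f‖ * r), ?_⟩
  rintro b ⟨z, ⟨_, hz⟩, rfl⟩
  rw [mem_closedBall] at hz
  have h1 : ‖w - z‖ ≤ r := by
    rw [norm_sub_rev, ← dist_eq_norm]; exact hz
  have h2 := f.le_opNorm (w - z)
  have h3 : |f (w - z)| ≤ ‖f‖ * ‖w - z‖ := h2
  nlinarith [norm_nonneg f, neg_abs_le (f (w - z))]

lemma I_bddAbove (hCne : C.Nonempty) (f : X →L[ℝ] ℝ) (y : X) :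
    BddAbove (Set.range fun δ' : {δ : ℝ // 0 < δ} =>
      sInf ((fun z => f (y - z)) '' (C ∩ closedBall y (infDist y C + δ'.1)))) := by
  refine ⟨‖f‖ * (infDist y C + 1), ?_⟩
  rintro b ⟨⟨δ', hδ'⟩, rfl⟩
  have hmin : 0 < min δ' 1 := lt_min hδ' one_pos
  obtain ⟨z, hzC, hz⟩ := (infDist_lt_iff hCne).1
    (lt_add_of_pos_right (infDist y C) hmin)
  have hz1 : dist y z ≤ infDist y C + 1 :=
    hz.le.trans (by linarith [min_le_right δ' (1:ℝ)])
  have hzmem : z ∈ C ∩ closedBall y (infDist y C + δ') :=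
    ⟨hzC, by rw [mem_closedBall, dist_comm]; linarith [min_le_left δ' (1:ℝ)]⟩
  have h1 : sInf ((fun z => f (y - z)) '' (C ∩ closedBall y (infDist y C + δ'))) ≤ f (y - z) :=
    csInf_le (I_bddBelow f y _) ⟨z, hzmem, rfl⟩
  have h2 : |f (y - z)| ≤ ‖f‖ * ‖y - z‖ := f.le_opNorm (y - z)
  have h3 : ‖y - z‖ ≤ infDist y C + 1 := by rw [← dist_eq_norm]; exact hz1
  nlinarith [norm_nonneg f, le_abs_self (f (y - z))]

end Aux

/-- For every nonempty closed set `C` in a real Banach space and every `n`, the set `L_n(C)`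
is open; consequently `L(C) = ⋂_{n ≥ 1} L_n(C)` is a `Gδ` set. -/
theorem LSet_isOpen_and_iInter_isGδ
    (X : Type*) [NormedAddCommGroup X] [NormedSpace ℝ X] [CompleteSpace X]
    (C : Set X) (hCclosed : IsClosed C) (hCne : C.Nonempty) :
    (∀ n : ℕ, IsOpen (LSet C n)) ∧ IsGδ (⋂ n ∈ Set.Ici 1, LSet C n) := by
  have hopen : ∀ n : ℕ, IsOpen (LSet C n) := by
    intro n
    rw [Metric.isOpen_iff]
    rintro x ⟨hxC, f, hf, hsup⟩
    set c : ℝ := (2 : ℝ) ^ (-(n : ℤ)) with hc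
    have hcpos : 0 < c := by positivity
    have hcle : c ≤ 1 := by
      rw [hc, zpow_neg, zpow_natCast]
      exact inv_le_one_of_one_le₀ (one_le_pow₀ (by norm_num : (1:ℝ) ≤ 2))
    set dx := infDist x C with hdx
    have hdxpos : 0 < dx := (hCclosed.notMem_iff_infDist_pos hCne).1 hxC
    obtain ⟨⟨δ₀, hδ₀⟩, h0⟩ := exists_lt_of_lt_ciSup hsup
    set I0 := sInf ((fun z => f (x - z)) '' (C ∩ closedBall x (dx + δ₀))) with hI0
    have hm : 0 < I0 - (1 - c) * dx := by linarith [h0]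
    set m := I0 - (1 - c) * dx with hmdef
    set ε := min (min (dx / 2) (δ₀ / 3)) (m / 3) with hε
    have hεpos : 0 < ε := by
      apply lt_min (lt_min (by linarith) (by linarith)) (by linarith)
    have hεdx : ε ≤ dx / 2 := (min_le_left _ _).trans (min_le_left _ _)
    have hεδ : ε ≤ δ₀ / 3 := (min_le_left _ _).trans (min_le_right _ _)
    have hεm : ε ≤ m / 3 := min_le_right _ _
    refine ⟨ε, hεpos, ?_⟩
    intro y hy
    rw [mem_ball] at hy
    have hd1 : infDist y C ≤ dx + dist y x :=
      (infDist_le_infDist_add_dist (x := y) (y := x)).trans (by rw [hdx])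
    have hd2 : dx - dist y x ≤ infDist y C := by
      have := infDist_le_infDist_add_dist (x := x) (y := y) (s := C)
      rw [dist_comm] at this; linarith
    have hdyx : (0:ℝ) ≤ dist y x := dist_nonneg
    have hdypos : 0 < infDist y C := by linarith
    have hyC : y ∉ C := (hCclosed.notMem_iff_infDist_pos hCne).2 hdypos
    refine ⟨hyC, f, hf, ?_⟩
    set δ := δ₀ - 2 * ε with hδdef
    have hδpos : 0 < δ := by rw [hδdef]; linarith
    have hsub : C ∩ closedBall y (infDist y C + δ) ⊆ C ∩ closedBall x (dx + δ₀) := by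
      rintro z ⟨hzC, hz⟩
      rw [mem_closedBall] at hz
      refine ⟨hzC, ?_⟩
      rw [mem_closedBall]
      have ht := dist_triangle z y x
      rw [hδdef] at hz
      linarith
    have hIy : I0 - dist y x ≤
        sInf ((fun z => f (y - z)) '' (C ∩ closedBall y (infDist y C + δ))) := by
      apply le_csInf ((S_nonempty hCne y hδpos).image _)
      rintro b ⟨z, hzmem, rfl⟩
      have hzx : z ∈ C ∩ closedBall x (dx + δ₀) := hsub hzmem
      have h1 : I0 ≤ f (x - z) := csInf_le (I_bddBelow f x _) ⟨z, hzx, rfl⟩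
      have h2 : f (x - z) - f (y - z) = f (x - y) := by
        rw [← map_sub]; congr 1; abel
      have h3 : f (x - y) ≤ ‖x - y‖ := by
        calc f (x - y) ≤ |f (x - y)| := le_abs_self _
        _ ≤ ‖f‖ * ‖x - y‖ := f.le_opNorm _
        _ = ‖x - y‖ := by rw [hf, one_mul]
      have h4 : ‖x - y‖ = dist y x := by rw [norm_sub_rev, ← dist_eq_norm]
      linarith
    have hterm := le_ciSup (I_bddAbove hCne f y) (⟨δ, hδpos⟩ : {δ : ℝ // 0 < δ})
    have hfinal : (1 - c) * infDist y C < I0 - dist y x := by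
      have hmul : (1 - c) * infDist y C ≤ (1 - c) * (dx + dist y x) :=
        mul_le_mul_of_nonneg_left hd1 (by linarith)
      have : (1 - c) * (dx + dist y x) ≤ (1 - c) * dx + dist y x := by nlinarith
      linarith
    calc (1 - c) * infDist y C < I0 - dist y x := hfinal
      _ ≤ _ := hIy.trans hterm
  exact ⟨hopen, IsGδ.biInter (Set.to_countable _) fun i _ => (hopen i).isGδ⟩
end

section
/- If X is a reflexive real Banach space and C ⊆ X is a nonempty closed set, then Ω(C) = L(C). -/
open Metric Filter Topology

/-- A real normed space is reflexive if the canonical embedding into its double dual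
is surjective. -/
def IsReflexiveSpace (X : Type*) [NormedAddCommGroup X] [NormedSpace ℝ X] : Prop :=
  Function.Surjective (NormedSpace.inclusionInDoubleDual ℝ X)

/-- The set `Ω(C)`: points `x ∉ C` for which there is a norm-one functional `x*` such that
for every `ε > 0` there is `δ > 0` with
`inf_{z ∈ C ∩ B(x, d_C(x)+δ)} x*(x-z) > (1-ε) d_C(x)`. -/
def OmegaSet {X : Type*} [NormedAddCommGroup X] [NormedSpace ℝ X] (C : Set X) : Set X :=
  {x | x ∉ C ∧ ∃ f : X →L[ℝ] ℝ, ‖f‖ = 1 ∧ ∀ ε > (0 : ℝ), ∃ δ > (0 : ℝ),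
    sInf ((fun z => f (x - z)) '' (C ∩ Metric.closedBall x (Metric.infDist x C + δ)))
      > (1 - ε) * Metric.infDist x C}

/-!
Ω(C) ⊆ L_n(C) is immediate. For the converse let `d = d_C(x) > 0` and let K be the set of
weak limits of approximate nearest points, `K = ⋂_{δ>0} weak-closure (C ∩ B(x, d+δ))`.
By reflexivity the sets in this intersection are weakly compact, so K is nonempty, and
`‖x - z‖ ≤ d` on K. If `x*(x - ·) > c` on some `C ∩ B(x, d+δ)` then `x*(x - ·) ≥ c` on K;
conversely, by weak compactness, `x*(x - ·) > c` on K forces `x*(x - ·) > c` on some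
`C ∩ B(x, d+δ)`. Hence the functionals witnessing `x ∈ L_n(C)` satisfy
`x*_n(x - ·) ≥ (1 - 2^{-n}) d` on K, and a weak* cluster point `x*` of them (Banach–Alaoglu)
has `x*(x - ·) ≥ d` on K. Testing at a point of K shows `‖x*‖ = 1`, and the converse transfer
shows that `x*` witnesses `x ∈ Ω(C)`.
-/

theorem exists_lt_one_sub_two_zpow_mul {c d : ℝ} (hcd : c < d) (hd : 0 < d) :
    ∃ n ≥ (1 : ℕ), c < (1 - (2 : ℝ) ^ (-(n : ℤ))) * d := by
  obtain ⟨n, hn⟩ := exists_pow_lt_of_lt_one (div_pos (sub_pos.2 hcd) hd)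
    (by norm_num : (2 : ℝ)⁻¹ < 1)
  refine ⟨n + 1, by omega, ?_⟩
  have h2 : (2 : ℝ) ^ (-((n + 1 : ℕ) : ℤ)) < (d - c) / d :=
    calc (2 : ℝ) ^ (-((n + 1 : ℕ) : ℤ)) = 2⁻¹ ^ (n + 1) := by
          rw [zpow_neg, zpow_natCast, inv_pow]
      _ ≤ 2⁻¹ ^ n := pow_le_pow_of_le_one (by norm_num) (by norm_num) n.le_succ
      _ < (d - c) / d := hn
  rw [lt_div_iff₀ hd] at h2
  push_cast at h2 ⊢
  linarith

section NearestPoints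

variable {M : Type*} [PseudoMetricSpace M] {C : Set M} {x : M}

def approxNearest (C : Set M) (x : M) (δ : ℝ) : Set M :=
  C ∩ closedBall x (infDist x C + δ)

theorem approxNearest_mono : Monotone (approxNearest C x) := fun _ _ h =>
  Set.inter_subset_inter_right _ (closedBall_subset_closedBall (by linarith))

theorem approxNearest_nonempty (hC : C.Nonempty) {δ : ℝ} (hδ : 0 < δ) :
    (approxNearest C x δ).Nonempty := by
  obtain ⟨z, hzC, hz⟩ := (infDist_lt_iff hC).1 (lt_add_of_pos_right (infDist x C) hδ)
  exact ⟨z, hzC, mem_closedBall_comm.1 hz.le⟩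

end NearestPoints

section NormedSpace

variable {X : Type*} [NormedAddCommGroup X] [NormedSpace ℝ X]

theorem WeakSpace.continuous_apply_sub (f : StrongDual ℝ X) (x : X) :
    Continuous fun w : WeakSpace ℝ X => f (x - (toWeakSpace ℝ X).symm w) := by
  simp_rw [map_sub]
  exact continuous_const.sub (WeakBilin.eval_continuous _ f)

theorem closure_toWeakSpace_image_subset_closedBall {s : Set X} {x : X} {r : ℝ}
    (hs : s ⊆ closedBall x r) :
    closure (toWeakSpace ℝ X '' s) ⊆ toWeakSpace ℝ X '' closedBall x r := by
  rw [← isClosed_closedBall.closure_eq, (convex_closedBall x r).toWeakSpace_closure ℝ]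
  exact closure_mono (Set.image_mono hs)

theorem IsReflexiveSpace.isCompact_closure_toWeakSpace_image (hX : IsReflexiveSpace X)
    {s : Set X} (hs : Bornology.IsBounded s) :
    IsCompact (closure (toWeakSpace ℝ X '' s)) := by
  refine NormedSpace.isCompact_closure_of_isBounded ℝ X _
    (by rwa [Set.preimage_image_eq _ (toWeakSpace ℝ X).injective]) fun ξ _ => ?_
  obtain ⟨z, hz⟩ := hX (WeakDual.toStrongDual ξ)
  exact ⟨toWeakSpace ℝ X z, congrArg StrongDual.toWeakDual hz⟩

theorem exists_norm_le_one_forall_le_apply {S : Set X} {d : ℝ}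
    (h : ∀ c < d, ∃ f : StrongDual ℝ X, ‖f‖ ≤ 1 ∧ ∀ w ∈ S, c ≤ f w) :
    ∃ f : StrongDual ℝ X, ‖f‖ ≤ 1 ∧ ∀ w ∈ S, d ≤ f w := by
  let G : Set.Iio d → Set (WeakDual ℝ X) := fun c =>
    WeakDual.toStrongDual ⁻¹' closedBall 0 1 ∩ ⋂ w ∈ S, {f | c ≤ f w}
  have hG_closed (c) : IsClosed (G c) :=
    (WeakDual.isClosed_closedBall 0 1).inter <|
      isClosed_biInter fun w _ => isClosed_le continuous_const (WeakDual.eval_continuous w)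
  have hG_nonempty (c : Set.Iio d) : (G c).Nonempty := by
    obtain ⟨f, hf, hfS⟩ := h c c.2
    exact ⟨StrongDual.toWeakDual f, by simpa using hf, Set.mem_iInter₂.2 hfS⟩
  have hG_antitone : Antitone G := fun c c' hcc' =>
    Set.inter_subset_inter_right _ <| Set.biInter_mono le_rfl fun _ _ _ hf =>
      (Subtype.mono_coe _ hcc').trans hf
  have : Nonempty (Set.Iio d) := ⟨⟨d - 1, by simp⟩⟩
  obtain ⟨f, hf⟩ := IsCompact.nonempty_iInter_of_directed_nonempty_isCompact_isClosed G
    hG_antitone.directed_ge hG_nonempty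
    (fun c => (WeakDual.isCompact_closedBall 0 1).of_isClosed_subset (hG_closed c)
      Set.inter_subset_left) hG_closed
  have hf := Set.mem_iInter.1 hf
  refine ⟨WeakDual.toStrongDual f, by simpa using (hf ⟨d - 1, by simp⟩).1, fun w hw => ?_⟩
  exact le_of_forall_lt_imp_le_of_dense fun c hc => Set.mem_iInter₂.1 (hf ⟨c, hc⟩).2 w hw

def weakNearestLimits (C : Set X) (x : X) : Set X :=
  ⋂ δ : {δ : ℝ // 0 < δ},
    toWeakSpace ℝ X ⁻¹' closure (toWeakSpace ℝ X '' approxNearest C x δ)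

section WeakNearestLimits

variable {C : Set X} {x : X}

theorem bddBelow_image_apply_sub_approxNearest (f : StrongDual ℝ X) (δ : ℝ) :
    BddBelow ((fun z => f (x - z)) '' approxNearest C x δ) := by
  refine ⟨-(‖f‖ * (infDist x C + δ)), ?_⟩
  rintro - ⟨z, hz, rfl⟩
  have := (f.le_opNorm (x - z)).trans
    (mul_le_mul_of_nonneg_left (mem_closedBall_iff_norm'.1 hz.2) (norm_nonneg f))
  linarith [neg_abs_le (f (x - z)), Real.norm_eq_abs (f (x - z))]

theorem monotone_closure_toWeakSpace_approxNearest :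
    Monotone fun δ : ℝ => closure (toWeakSpace ℝ X '' approxNearest C x δ) :=
  fun _ _ h => closure_mono (Set.image_mono (approxNearest_mono h))

theorem IsReflexiveSpace.isCompact_closure_toWeakSpace_approxNearest (hX : IsReflexiveSpace X)
    (δ : ℝ) : IsCompact (closure (toWeakSpace ℝ X '' approxNearest C x δ)) :=
  hX.isCompact_closure_toWeakSpace_image (isBounded_closedBall.subset Set.inter_subset_right)

theorem weakNearestLimits_nonempty (hX : IsReflexiveSpace X) (hC : C.Nonempty) :
    (weakNearestLimits C x).Nonempty := by
  have : Nonempty {δ : ℝ // 0 < δ} := ⟨⟨1, one_pos⟩⟩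
  obtain ⟨w, hw⟩ := IsCompact.nonempty_iInter_of_directed_nonempty_isCompact_isClosed
    (fun δ : {δ : ℝ // 0 < δ} => closure (toWeakSpace ℝ X '' approxNearest C x δ))
    (monotone_closure_toWeakSpace_approxNearest.comp (Subtype.mono_coe _)).directed_ge
    (fun δ => ((approxNearest_nonempty hC δ.2).image _).closure)
    (fun δ => hX.isCompact_closure_toWeakSpace_approxNearest δ)
    fun _ => isClosed_closure
  exact ⟨(toWeakSpace ℝ X).symm w, by simpa [weakNearestLimits] using hw⟩

theorem norm_sub_le_of_mem_weakNearestLimits {z : X} (hz : z ∈ weakNearestLimits C x) :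
    ‖x - z‖ ≤ infDist x C := by
  refine le_of_forall_pos_le_add fun δ hδ => ?_
  obtain ⟨y, hy, hyz⟩ := closure_toWeakSpace_image_subset_closedBall Set.inter_subset_right
    (Set.mem_iInter.1 hz ⟨δ, hδ⟩)
  rw [← (toWeakSpace ℝ X).injective hyz, ← dist_eq_norm, dist_comm]
  exact hy

theorem le_apply_sub_of_mem_weakNearestLimits {f : StrongDual ℝ X} {c δ : ℝ} (hδ : 0 < δ)
    (h : ∀ z ∈ approxNearest C x δ, c ≤ f (x - z)) {z : X}
    (hz : z ∈ weakNearestLimits C x) :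
    c ≤ f (x - z) := by
  refine closure_minimal (t := {w | c ≤ f (x - (toWeakSpace ℝ X).symm w)}) ?_
    (isClosed_le continuous_const (WeakSpace.continuous_apply_sub f x))
    (Set.mem_iInter.1 hz ⟨δ, hδ⟩)
  rintro - ⟨y, hy, rfl⟩
  simpa using h y hy

theorem IsReflexiveSpace.exists_forall_lt_apply_sub_of_forall_weakNearestLimits
    (hX : IsReflexiveSpace X) {f : StrongDual ℝ X} {c : ℝ}
    (h : ∀ z ∈ weakNearestLimits C x, c < f (x - z)) :
    ∃ δ > 0, ∀ z ∈ approxNearest C x δ, c < f (x - z) := by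
  by_contra! hbad
  let t (δ : {δ : ℝ // 0 < δ}) : Set (WeakSpace ℝ X) :=
    closure (toWeakSpace ℝ X '' approxNearest C x δ) ∩
      {w | f (x - (toWeakSpace ℝ X).symm w) ≤ c}
  have ht_closed (δ) : IsClosed (t δ) :=
    isClosed_closure.inter (isClosed_le (WeakSpace.continuous_apply_sub f x) continuous_const)
  have : Nonempty {δ : ℝ // 0 < δ} := ⟨⟨1, one_pos⟩⟩
  obtain ⟨w, hw⟩ := IsCompact.nonempty_iInter_of_directed_nonempty_isCompact_isClosed t
    (Monotone.directed_ge fun δ δ' h =>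
      Set.inter_subset_inter_left _ (monotone_closure_toWeakSpace_approxNearest h))
    (fun δ => by
      obtain ⟨z, hz, hfz⟩ := hbad δ δ.2
      exact ⟨toWeakSpace ℝ X z, subset_closure ⟨z, hz, rfl⟩, by simpa using hfz⟩)
    (fun δ => (hX.isCompact_closure_toWeakSpace_approxNearest δ).of_isClosed_subset
      (ht_closed δ) Set.inter_subset_left) ht_closed
  have hw := Set.mem_iInter.1 hw
  refine (h ((toWeakSpace ℝ X).symm w) (Set.mem_iInter.2 fun δ => ?_)).not_ge
    (hw ⟨1, one_pos⟩).2
  simpa using (hw δ).1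

end WeakNearestLimits

section OmegaSetLSet

variable {C : Set X} {x : X}

theorem sInf_image_apply_sub_approxNearest_le (hC : C.Nonempty) {f : StrongDual ℝ X}
    (hf : ‖f‖ ≤ 1) {δ : ℝ} (hδ : 0 < δ) :
    sInf ((fun z => f (x - z)) '' approxNearest C x δ) ≤ infDist x C + 1 := by
  obtain ⟨z, hz⟩ := approxNearest_nonempty (x := x) hC (lt_min hδ one_pos)
  refine (csInf_le (bddBelow_image_apply_sub_approxNearest f δ)
    ⟨z, approxNearest_mono (min_le_left δ 1) hz, rfl⟩).trans ?_
  calc f (x - z) ≤ ‖f‖ * ‖x - z‖ := (le_abs_self _).trans (f.le_opNorm _)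
    _ ≤ 1 * (infDist x C + min δ 1) :=
      mul_le_mul hf (mem_closedBall_iff_norm'.1 hz.2) (norm_nonneg _) zero_le_one
    _ ≤ infDist x C + 1 := by linarith [min_le_right δ 1]

theorem omegaSet_subset_LSet (hC : C.Nonempty) (n : ℕ) : OmegaSet C ⊆ LSet C n := by
  rintro x ⟨hxC, f, hf, hΩ⟩
  refine ⟨hxC, f, hf, ?_⟩
  obtain ⟨δ, hδ, hδf⟩ := hΩ _ (zpow_pos two_pos (-(n : ℤ)))
  have hbdd : BddAbove (Set.range fun δ : {δ : ℝ // 0 < δ} =>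
      sInf ((fun z => f (x - z)) '' approxNearest C x δ)) :=
    ⟨_, Set.forall_mem_range.2 fun δ => sInf_image_apply_sub_approxNearest_le hC hf.le δ.2⟩
  exact hδf.trans_le (le_ciSup hbdd ⟨δ, hδ⟩)

theorem exists_forall_lt_apply_sub_of_mem_LSet {n : ℕ} (hx : x ∈ LSet C n) :
    ∃ f : StrongDual ℝ X, ‖f‖ = 1 ∧ ∃ δ > 0,
      ∀ z ∈ approxNearest C x δ, (1 - (2 : ℝ) ^ (-(n : ℤ))) * infDist x C < f (x - z) := by
  obtain ⟨-, f, hf, hsup⟩ := hx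
  obtain ⟨⟨δ, hδ⟩, hδf⟩ := exists_lt_of_lt_ciSup hsup
  exact ⟨f, hf, δ, hδ, fun z hz =>
    hδf.trans_le (csInf_le (bddBelow_image_apply_sub_approxNearest f δ) ⟨z, hz, rfl⟩)⟩

theorem mem_omegaSet_of_forall_lt (hC : C.Nonempty) (hd : 0 < infDist x C)
    {f : StrongDual ℝ X} (hf : ‖f‖ = 1)
    (h : ∀ c < infDist x C, ∃ δ > 0, ∀ z ∈ approxNearest C x δ, c < f (x - z)) :
    x ∈ OmegaSet C := by
  refine ⟨fun hx => hd.ne' (infDist_zero_of_mem hx), f, hf, fun ε hε => ?_⟩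
  obtain ⟨δ, hδ, hδf⟩ := h ((1 - ε / 2) * infDist x C) (by nlinarith)
  refine ⟨δ, hδ, ?_⟩
  calc (1 - ε) * infDist x C < (1 - ε / 2) * infDist x C := by nlinarith
    _ ≤ _ := le_csInf ((approxNearest_nonempty hC hδ).image _) <| by
      rintro - ⟨z, hz, rfl⟩
      exact (hδf z hz).le

end OmegaSetLSet

theorem mem_omegaSet_of_forall_mem_LSet (hX : IsReflexiveSpace X) {C : Set X} (hCc : IsClosed C)
    (hC : C.Nonempty) {x : X} (hx : ∀ n ≥ 1, x ∈ LSet C n) : x ∈ OmegaSet C := by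
  set d := infDist x C
  have hd : 0 < d := (hCc.notMem_iff_infDist_pos hC).1 (hx 1 le_rfl).1
  have happrox : ∀ c < d, ∃ f : StrongDual ℝ X, ‖f‖ ≤ 1 ∧
      ∀ w ∈ (x - ·) '' weakNearestLimits C x, c ≤ f w := by
    intro c hc
    obtain ⟨n, hn, hcn⟩ := exists_lt_one_sub_two_zpow_mul hc hd
    obtain ⟨f, hf, δ, hδ, hfδ⟩ := exists_forall_lt_apply_sub_of_mem_LSet (hx n hn)
    refine ⟨f, hf.le, ?_⟩
    rintro - ⟨z, hz, rfl⟩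
    exact hcn.le.trans (le_apply_sub_of_mem_weakNearestLimits hδ (fun z hz => (hfδ z hz).le) hz)
  obtain ⟨f, hf, hfd⟩ := exists_norm_le_one_forall_le_apply happrox
  obtain ⟨z, hz⟩ := weakNearestLimits_nonempty (x := x) hX hC
  have hf1 : ‖f‖ = 1 := by
    refine hf.antisymm (le_of_mul_le_mul_right ?_ hd)
    calc 1 * d ≤ f (x - z) := by simpa using hfd _ ⟨z, hz, rfl⟩
      _ ≤ ‖f‖ * ‖x - z‖ := (le_abs_self _).trans (f.le_opNorm _)
      _ ≤ ‖f‖ * d :=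
        mul_le_mul_of_nonneg_left (norm_sub_le_of_mem_weakNearestLimits hz) (norm_nonneg f)
  exact mem_omegaSet_of_forall_lt hC hd hf1 fun c hc =>
    hX.exists_forall_lt_apply_sub_of_forall_weakNearestLimits fun z hz =>
      hc.trans_le (hfd _ ⟨z, hz, rfl⟩)

end NormedSpace

theorem omegaSet_eq_iInter_LSet_general
    (X : Type*) [NormedAddCommGroup X] [NormedSpace ℝ X]
    (hrefl : IsReflexiveSpace X)
    (C : Set X) (hCclosed : IsClosed C) (hCne : C.Nonempty) :
    OmegaSet C = ⋂ n ∈ Set.Ici 1, LSet C n := by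
  ext x
  simp only [Set.mem_iInter₂, Set.mem_Ici]
  exact ⟨fun hx n _ => omegaSet_subset_LSet hCne n hx,
    mem_omegaSet_of_forall_mem_LSet hrefl hCclosed hCne⟩

/-- If `X` is a reflexive real Banach space and `C ⊆ X` is a nonempty closed set,
then `Ω(C) = L(C)` where `L(C) = ⋂_{n ≥ 1} L_n(C)`. -/
theorem omegaSet_eq_iInter_LSet
    (X : Type*) [NormedAddCommGroup X] [NormedSpace ℝ X] [CompleteSpace X]
    (hrefl : IsReflexiveSpace X)
    (C : Set X) (hCclosed : IsClosed C) (hCne : C.Nonempty) :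
    OmegaSet C = ⋂ n ∈ Set.Ici 1, LSet C n :=
  omegaSet_eq_iInter_LSet_general X hrefl C hCclosed hCne
end

section
/- Let C be a nonempty closed set in a real Banach space X. If x ∈ X\C and the Fréchet subdifferential ∂d_C(x) of the distance function is nonempty, then x ∈ Ω(C). -/
/-!
Let `φ ∈ ∂d_C(x)` and `d = d_C(x) > 0`. Since `d_C` is `1`-Lipschitz, `‖φ‖ ≤ 1`. Conversely, for
`z ∈ C` with `‖x - z‖ ≤ d + δ`, the point `x + t (z - x)` lies at distance at most
`(1 - t) ‖x - z‖` from `C`, so the subgradient inequality in the direction `z - x` forces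
`φ (x - z) ≥ (1 - ε) ‖x - z‖` once `δ` is small compared to `t d`. Such `z` exist for every
`δ > 0`, which gives `‖φ‖ ≥ 1`, and since `‖x - z‖ ≥ d` the same estimate is the lower bound on
the infimum required in `Ω(C)`.
-/

open Metric Filter Topology

/-- The Fréchet subdifferential of `f : X → ℝ` at `x`: the set of continuous linear
functionals `φ` with `liminf_{y → 0} (f(x+y) - f(x) - φ(y))/‖y‖ ≥ 0`, expressed in
`ε`-`δ` form. -/
def FrechetSubdiff {X : Type*} [NormedAddCommGroup X] [NormedSpace ℝ X]
    (f : X → ℝ) (x : X) : Set (X →L[ℝ] ℝ) :=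
  {φ | ∀ ε > (0 : ℝ), ∃ δ > (0 : ℝ), ∀ y : X, ‖y‖ < δ →
    f (x + y) - f x - φ y ≥ -ε * ‖y‖}

section FrechetSubdiff

variable {X : Type*} [NormedAddCommGroup X] [NormedSpace ℝ X] {f : X → ℝ} {x : X}
  {φ : X →L[ℝ] ℝ}

theorem eventually_apply_smul_le_of_mem_frechetSubdiff (hφ : φ ∈ FrechetSubdiff f x)
    {ε : ℝ} (hε : 0 < ε) (R : ℝ) :
    ∀ᶠ t in 𝓝[>] (0 : ℝ), ∀ v : X, ‖v‖ ≤ R →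
      t * φ v - ε * t * ‖v‖ ≤ f (x + t • v) - f x := by
  obtain ⟨δ, hδ, hfδ⟩ := hφ ε hε
  have hsmall : ∀ᶠ t in 𝓝[>] (0 : ℝ), t * R < δ := by
    have : Tendsto (fun t : ℝ => t * R) (𝓝[>] 0) (𝓝 (0 * R)) :=
      tendsto_nhdsWithin_of_tendsto_nhds (tendsto_id.mul_const R)
    exact Tendsto.eventually_lt_const (by rwa [zero_mul]) this
  filter_upwards [hsmall, self_mem_nhdsWithin] with t htR (ht : 0 < t) v hv
  have hnorm : ‖t • v‖ = t * ‖v‖ := by rw [norm_smul, Real.norm_of_nonneg ht.le]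
  have := hfδ (t • v) (by rw [hnorm]; nlinarith)
  rw [map_smul, smul_eq_mul, hnorm] at this
  linarith

theorem norm_le_of_mem_frechetSubdiff_of_lipschitzWith {K : NNReal} (hf : LipschitzWith K f)
    (hφ : φ ∈ FrechetSubdiff f x) : ‖φ‖ ≤ K := by
  have hle : ∀ v, φ v ≤ K * ‖v‖ := by
    intro v
    refine le_of_forall_pos_le_add fun ε hε => ?_
    have hε' : 0 < ε / (‖v‖ + 1) := by positivity
    obtain ⟨t, hbound, ht⟩ :=
      ((eventually_apply_smul_le_of_mem_frechetSubdiff hφ hε' ‖v‖).and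
        self_mem_nhdsWithin).exists
    have hlip : f (x + t • v) - f x ≤ K * (t * ‖v‖) := by
      have := hf.dist_le_mul (x + t • v) x
      rw [Real.dist_eq, dist_eq_norm, add_sub_cancel_left, norm_smul,
        Real.norm_of_nonneg ht.le, abs_le] at this
      exact this.2
    have hεv : ε / (‖v‖ + 1) * ‖v‖ ≤ ε := by
      rw [div_mul_eq_mul_div, div_le_iff₀ (by positivity)]
      nlinarith [norm_nonneg v]
    have : t * φ v ≤ t * (K * ‖v‖ + ε) := by nlinarith [hbound v le_rfl]
    exact le_of_mul_le_mul_left this ht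
  refine φ.opNorm_le_bound K.coe_nonneg fun v => ?_
  rw [Real.norm_eq_abs, abs_le]
  exact ⟨by linarith [map_neg φ v ▸ norm_neg v ▸ hle (-v)], hle v⟩

end FrechetSubdiff

section InfDist

variable {X : Type*} [NormedAddCommGroup X] [NormedSpace ℝ X] {C : Set X} {x : X}
  {φ : X →L[ℝ] ℝ}

theorem exists_pos_forall_le_apply_of_mem_frechetSubdiff_infDist
    (hφ : φ ∈ FrechetSubdiff (fun z => infDist z C) x) (hd : 0 < infDist x C)
    {ε : ℝ} (hε : 0 < ε) :
    ∃ δ > 0, ∀ z ∈ C, dist x z ≤ infDist x C + δ → (1 - ε) * ‖x - z‖ ≤ φ (x - z) := by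
  set d := infDist x C
  obtain ⟨t, hbound, ht, ht1⟩ :=
    ((eventually_apply_smul_le_of_mem_frechetSubdiff hφ (half_pos hε) (d + 1)).and
      (Ioc_mem_nhdsGT one_pos)).exists
  refine ⟨min 1 (ε / 2 * d * t), by positivity, fun z hz hzx => ?_⟩
  rw [dist_eq_norm] at hzx
  have hdz : d ≤ ‖x - z‖ := by rw [← dist_eq_norm]; exact infDist_le_dist_of_mem hz
  have hmove : infDist (x + t • (z - x)) C ≤ (1 - t) * ‖x - z‖ := by
    calc infDist (x + t • (z - x)) C ≤ ‖x + t • (z - x) - z‖ := by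
          rw [← dist_eq_norm]; exact infDist_le_dist_of_mem hz
      _ = ‖(1 - t) • (x - z)‖ := by congr 1; module
      _ = (1 - t) * ‖x - z‖ := by rw [norm_smul, Real.norm_of_nonneg (by linarith)]
  have hsub := hbound (z - x) (by rw [norm_sub_rev]; linarith [min_le_left 1 (ε / 2 * d * t)])
  rw [← neg_sub x z, map_neg, norm_neg, neg_sub] at hsub
  have hzx' : ‖x - z‖ ≤ d + ε / 2 * d * t := hzx.trans (by gcongr; exact min_le_right _ _)
  have : t * ((1 - ε) * ‖x - z‖) ≤ t * φ (x - z) := by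
    nlinarith [mul_le_mul_of_nonneg_left hdz (by positivity : 0 ≤ ε / 2 * t)]
  exact le_of_mul_le_mul_left this ht

theorem one_le_norm_of_mem_frechetSubdiff_infDist (hC : C.Nonempty)
    (hφ : φ ∈ FrechetSubdiff (fun z => infDist z C) x) (hd : 0 < infDist x C) : 1 ≤ ‖φ‖ := by
  refine le_of_forall_pos_le_add fun ε hε => ?_
  obtain ⟨δ, hδ, hφz⟩ := exists_pos_forall_le_apply_of_mem_frechetSubdiff_infDist hφ hd hε
  obtain ⟨z, hz, hzx⟩ := (infDist_lt_iff hC).mp (lt_add_of_pos_right (infDist x C) hδ)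
  have hpos : 0 < ‖x - z‖ := by
    rw [← dist_eq_norm]; exact hd.trans_le (infDist_le_dist_of_mem hz)
  have : (1 - ε) * ‖x - z‖ ≤ ‖φ‖ * ‖x - z‖ :=
    (hφz z hz hzx.le).trans ((le_abs_self _).trans (φ.le_opNorm _))
  linarith [le_of_mul_le_mul_right this hpos]

end InfDist

theorem mem_omegaSet_of_frechetSubdiff_nonempty_general
    (X : Type*) [NormedAddCommGroup X] [NormedSpace ℝ X]
    (C : Set X) (hCclosed : IsClosed C) (hCne : C.Nonempty)
    (x : X) (hx : x ∉ C)
    (hsub : (FrechetSubdiff (fun z => Metric.infDist z C) x).Nonempty) :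
    x ∈ OmegaSet C := by
  obtain ⟨φ, hφ⟩ := hsub
  have hd : 0 < infDist x C := (hCclosed.notMem_iff_infDist_pos hCne).mp hx
  have hnorm : ‖φ‖ = 1 := le_antisymm
    (by simpa using norm_le_of_mem_frechetSubdiff_of_lipschitzWith (lipschitz_infDist_pt C) hφ)
    (one_le_norm_of_mem_frechetSubdiff_infDist hCne hφ hd)
  refine ⟨hx, φ, hnorm, fun ε hε => ?_⟩
  obtain ⟨δ, hδ, hφz⟩ := exists_pos_forall_le_apply_of_mem_frechetSubdiff_infDist hφ hd
    (lt_min (half_pos hε) one_pos)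
  refine ⟨δ, hδ, ?_⟩
  obtain ⟨z₀, hz₀, hz₀x⟩ := (infDist_lt_iff hCne).mp (lt_add_of_pos_right (infDist x C) hδ)
  have hne : ((fun z => φ (x - z)) '' (C ∩ closedBall x (infDist x C + δ))).Nonempty :=
    ⟨_, z₀, ⟨hz₀, mem_closedBall'.mpr hz₀x.le⟩, rfl⟩
  refine lt_of_lt_of_le (b := (1 - ε / 2) * infDist x C) (by nlinarith) (le_csInf hne ?_)
  rintro _ ⟨z, ⟨hz, hzx⟩, rfl⟩
  have hdz : infDist x C ≤ ‖x - z‖ := by rw [← dist_eq_norm]; exact infDist_le_dist_of_mem hz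
  calc (1 - ε / 2) * infDist x C ≤ (1 - min (ε / 2) 1) * ‖x - z‖ := by
        gcongr
        · linarith [min_le_right (ε / 2) 1]
        · exact min_le_left _ _
    _ ≤ φ (x - z) := hφz z hz (mem_closedBall'.mp hzx)

/-- If `x ∉ C` and the Fréchet subdifferential of the distance function `d_C` at `x` is
nonempty, then `x ∈ Ω(C)`. -/
theorem mem_omegaSet_of_frechetSubdiff_nonempty
    (X : Type*) [NormedAddCommGroup X] [NormedSpace ℝ X] [CompleteSpace X]
    (C : Set X) (hCclosed : IsClosed C) (hCne : C.Nonempty)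
    (x : X) (hx : x ∉ C)
    (hsub : (FrechetSubdiff (fun z => Metric.infDist z C) x).Nonempty) :
    x ∈ OmegaSet C :=
  mem_omegaSet_of_frechetSubdiff_nonempty_general X C hCclosed hCne x hx hsub
end

section
/- Let X be a reflexive Kadec real Banach space and C ⊆ X a nonempty closed set. Then every x ∈ Ω(C) has a nearest point in C, i.e., Ω(C) ⊆ N(C). -/
open Metric Filter Topology

/-- A real normed space is (sequentially) Kadec if every sequence converging weakly to `x`
whose norms converge to `‖x‖` converges to `x` in norm. -/
def IsKadecSpace (X : Type*) [NormedAddCommGroup X] [NormedSpace ℝ X] : Prop :=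
  ∀ (u : ℕ → X) (x : X),
    (∀ f : X →L[ℝ] ℝ, Tendsto (fun n => f (u n)) atTop (𝓝 (f x))) →
    Tendsto (fun n => ‖u n‖) atTop (𝓝 ‖x‖) →
    Tendsto u atTop (𝓝 x)

/-- The set of points of `X` that have a nearest point in `C`. -/
def NearestPoints {X : Type*} [NormedAddCommGroup X] (C : Set X) : Set X :=
  {x | ∃ z ∈ C, ‖x - z‖ = Metric.infDist x C}

/-!
Take a minimizing sequence `yₖ` in `C`. By reflexivity a subsequence converges weakly to some `z`.
Weak lower semicontinuity of the norm gives `‖x - z‖ ≤ d_C(x)`, while the functional `x*` from the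
definition of `Ω(C)` gives `x*(x - z) ≥ d_C(x)`. Hence `‖x - yₖ‖ → ‖x - z‖`, the Kadec property
upgrades weak to norm convergence, and `z ∈ C` is a nearest point.

Weak sequential compactness of bounded sets comes from weak compactness of closed balls
(Banach–Alaoglu in the bidual) together with a countable family of functionals separating the
points of the separable closed span of the sequence: along a diagonal subsequence on which these
functionals converge, the weak cluster point is unique.
-/

theorem TopologicalSpace.IsSeparable.exists_seq_strongDual_separating {𝕜 E : Type*} [RCLike 𝕜]
    [NormedAddCommGroup E] [NormedSpace 𝕜 E] {s : Set E} (hs : IsSeparable s) :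
    ∃ g : ℕ → StrongDual 𝕜 E, ∀ y ∈ s, (∀ j, g j y = 0) → y = 0 := by
  obtain ⟨c, hc, hsc⟩ := hs
  obtain ⟨v, hv⟩ := (hc.insert 0).exists_eq_range (Set.insert_nonempty 0 c)
  choose g hg_norm hg_apply using fun j => exists_dual_vector'' 𝕜 (v j)
  refine ⟨g, fun y hy hgy => norm_le_zero_iff.1 <| le_of_forall_pos_le_add fun ε hε => ?_⟩
  have hy' : y ∈ closure (Set.range v) := hv ▸ closure_mono (Set.subset_insert 0 c) (hsc hy)
  obtain ⟨_, ⟨j, rfl⟩, hj⟩ := Metric.mem_closure_iff.1 hy' (ε / 2) (half_pos hε)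
  have hvj : ‖v j‖ ≤ ‖y - v j‖ := by
    calc ‖v j‖ = ‖g j (v j - y)‖ := by
          rw [map_sub, hgy, sub_zero, hg_apply, RCLike.norm_ofReal, abs_norm]
      _ ≤ ‖g j‖ * ‖v j - y‖ := (g j).le_opNorm _
      _ ≤ ‖y - v j‖ := by rw [norm_sub_rev]; exact mul_le_of_le_one_left (norm_nonneg _) (hg_norm j)
  rw [dist_eq_norm] at hj
  calc ‖y‖ ≤ ‖y - v j‖ + ‖v j‖ := norm_le_norm_sub_add y (v j)
    _ ≤ 0 + ε := by linarith

theorem exists_subseq_tendsto_pi_of_forall_abs_le {ι : Type*} [Countable ι]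
    (v : ℕ → ι → ℝ) (B : ι → ℝ) (hv : ∀ k i, |v k i| ≤ B i) :
    ∃ a : ι → ℝ, ∃ φ : ℕ → ℕ, StrictMono φ ∧ Tendsto (v ∘ φ) atTop (𝓝 a) := by
  have hK : IsCompact (Set.univ.pi fun i => Set.Icc (-B i) (B i)) :=
    isCompact_univ_pi fun _ => isCompact_Icc
  obtain ⟨a, -, φ, hφ, ha⟩ :=
    hK.tendsto_subseq fun k => Set.mem_univ_pi.2 fun i => abs_le.1 (hv k i)
  exact ⟨a, φ, hφ, ha⟩

section WeakTopology

variable {X : Type*} [NormedAddCommGroup X] [NormedSpace ℝ X]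

theorem StrongDual.continuous_comp_toWeakSpace_symm (f : StrongDual ℝ X) :
    Continuous fun p : WeakSpace ℝ X => f ((toWeakSpace ℝ X).symm p) :=
  WeakBilin.eval_continuous (topDualPairing ℝ X).flip f

theorem Convex.mem_of_mapClusterPt_toWeakSpace {s : Set X} (hs : Convex ℝ s) (hsc : IsClosed s)
    {u : ℕ → X} (hu : ∀ k, u k ∈ s) {x : X}
    (hx : MapClusterPt (toWeakSpace ℝ X x) atTop fun k => toWeakSpace ℝ X (u k)) : x ∈ s := by
  have hclosed : IsClosed (toWeakSpace ℝ X '' s) := by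
    rw [← closure_eq_iff_isClosed, ← hs.toWeakSpace_closure ℝ, hsc.closure_eq]
  obtain ⟨y, hy, hyx⟩ :=
    hclosed.mem_of_mapClusterPt hx (Eventually.of_forall fun k => ⟨u k, hu k, rfl⟩)
  exact (toWeakSpace ℝ X).injective hyx ▸ hy

theorem StrongDual.apply_eq_of_mapClusterPt_toWeakSpace {u : ℕ → X} {x : X}
    (hx : MapClusterPt (toWeakSpace ℝ X x) atTop fun k => toWeakSpace ℝ X (u k))
    {f : StrongDual ℝ X} {c : ℝ} (hf : Tendsto (fun k => f (u k)) atTop (𝓝 c)) : f x = c :=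
  eq_of_nhds_neBot <|
    (hx.continuousAt_comp f.continuous_comp_toWeakSpace_symm.continuousAt).clusterPt.mono hf |>.neBot

theorem IsReflexiveSpace.isCompact_toWeakSpace_closedBall (hX : IsReflexiveSpace X) (r : ℝ) :
    IsCompact (toWeakSpace ℝ X '' closedBall 0 r) := by
  let J := NormedSpace.inclusionInDoubleDualLi (E := X) ℝ
  obtain ⟨Jinv, hJinv⟩ := hX.hasRightInverse
  have hJinv_J (x : X) : Jinv (J x) = x := J.injective (hJinv (J x))
  let e (ψ : WeakDual ℝ (StrongDual ℝ X)) : WeakSpace ℝ X :=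
    toWeakSpace ℝ X (Jinv (WeakDual.toStrongDual ψ))
  have he : Continuous e := WeakBilin.continuous_of_continuous_eval _ fun f => by
    convert WeakDual.eval_continuous (𝕜 := ℝ) f using 2 with ψ
    exact congrArg (· f) (hJinv ψ)
  convert (WeakDual.isCompact_closedBall (𝕜 := ℝ) (E := StrongDual ℝ X) 0 r).image he using 1
  ext p
  simp only [Set.mem_image, Set.mem_preimage, mem_closedBall_zero_iff]
  constructor
  · rintro ⟨x, hx, rfl⟩
    exact ⟨StrongDual.toWeakDual (J x), by rwa [← J.norm_map] at hx, by simp [e, hJinv_J]⟩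
  · rintro ⟨ψ, hψ, rfl⟩
    refine ⟨_, ?_, rfl⟩
    calc ‖Jinv (WeakDual.toStrongDual ψ)‖ = ‖J (Jinv (WeakDual.toStrongDual ψ))‖ :=
          (J.norm_map _).symm
      _ = ‖WeakDual.toStrongDual ψ‖ := congrArg norm (hJinv _)
      _ ≤ r := hψ

open TopologicalSpace in
theorem IsReflexiveSpace.exists_subseq_forall_tendsto_apply (hX : IsReflexiveSpace X)
    {w : ℕ → X} (hw : Bornology.IsBounded (Set.range w)) :
    ∃ z : X, ∃ φ : ℕ → ℕ, StrictMono φ ∧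
      ∀ f : StrongDual ℝ X, Tendsto (fun k => f (w (φ k))) atTop (𝓝 (f z)) := by
  obtain ⟨M, hM⟩ := hw.exists_norm_le
  let S₀ := Submodule.span ℝ (Set.range w)
  let S := S₀.topologicalClosure
  have hwS (k : ℕ) : w k ∈ S := S₀.le_topologicalClosure (Submodule.subset_span ⟨k, rfl⟩)
  have hS : IsSeparable (S : Set X) := by
    rw [Submodule.topologicalClosure_coe]
    exact (isSeparable_range (f := w) continuous_of_discreteTopology).span.closure
  obtain ⟨g, hg⟩ := hS.exists_seq_strongDual_separating (𝕜 := ℝ)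
  obtain ⟨a, φ, hφ, ha⟩ := exists_subseq_tendsto_pi_of_forall_abs_le (fun k j => g j (w k))
    (fun j => ‖g j‖ * M) fun k j => ((g j).le_opNorm _).trans
      (mul_le_mul_of_nonneg_left (hM _ ⟨k, rfl⟩) (norm_nonneg _))
  let u (k : ℕ) : WeakSpace ℝ X := toWeakSpace ℝ X (w (φ k))
  let K := toWeakSpace ℝ X '' closedBall 0 M
  have hK : IsCompact K := hX.isCompact_toWeakSpace_closedBall M
  have huK : ∀ᶠ k in atTop, u k ∈ K :=
    Eventually.of_forall fun k => ⟨_, mem_closedBall_zero_iff.2 (hM _ ⟨_, rfl⟩), rfl⟩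
  have hcluster (x : X) (hx : MapClusterPt (toWeakSpace ℝ X x) atTop u) :
      x ∈ S ∧ ∀ j, g j x = a j :=
    ⟨S.convex.mem_of_mapClusterPt_toWeakSpace S₀.isClosed_topologicalClosure (fun _ => hwS _) hx,
      fun j => StrongDual.apply_eq_of_mapClusterPt_toWeakSpace hx (tendsto_pi_nhds.1 ha j)⟩
  obtain ⟨p, -, hp⟩ := hK.exists_mapClusterPt (le_principal_iff.2 huK)
  set z := (toWeakSpace ℝ X).symm p
  have hz := hcluster z (by simpa [z] using hp)
  have hlim : Tendsto u atTop (𝓝 p) :=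
    hK.tendsto_nhds_of_unique_mapClusterPt huK fun q _ hq => by
      have hq' := hcluster ((toWeakSpace ℝ X).symm q) (by simpa using hq)
      have := hg _ (S.sub_mem hq'.1 hz.1) fun j => by rw [map_sub, hq'.2, hz.2, sub_self]
      simpa [z, sub_eq_zero] using this
  exact ⟨z, φ, hφ, fun f => (f.continuous_comp_toWeakSpace_symm.tendsto p).comp hlim⟩

end WeakTopology

theorem Metric.exists_seq_mem_tendsto_infDist {α : Type*} [PseudoMetricSpace α] (x : α)
    {s : Set α} (hs : s.Nonempty) :
    ∃ y : ℕ → α, (∀ k, y k ∈ s) ∧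
      Tendsto (fun k => dist x (y k)) atTop (𝓝 (infDist x s)) := by
  have (k : ℕ) : ∃ y ∈ s, dist x y < infDist x s + 1 / (k + 1) :=
    (infDist_lt_iff hs).1 (lt_add_of_pos_right _ (Nat.one_div_pos_of_nat (α := ℝ)))
  choose y hys hy using this
  refine ⟨y, hys, tendsto_of_tendsto_of_tendsto_of_le_of_le tendsto_const_nhds ?_
    (fun k => infDist_le_dist_of_mem (hys k)) fun k => (hy k).le⟩
  simpa using (tendsto_const_nhds (x := infDist x s)).add
    (tendsto_one_div_add_atTop_nhds_zero_nat (𝕜 := ℝ))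

theorem norm_le_of_forall_tendsto_apply {𝕜 E ι : Type*} [RCLike 𝕜] [NormedAddCommGroup E]
    [NormedSpace 𝕜 E] {l : Filter ι} [l.NeBot] {u : ι → E} {x : E} {L : ℝ}
    (hux : ∀ f : StrongDual 𝕜 E, Tendsto (fun i => f (u i)) l (𝓝 (f x)))
    (hL : Tendsto (fun i => ‖u i‖) l (𝓝 L)) : ‖x‖ ≤ L :=
  NormedSpace.norm_le_dual_bound 𝕜 x (ge_of_tendsto' hL fun _ => norm_nonneg _) fun f =>
    le_of_tendsto_of_tendsto' (hux f).norm (hL.mul_const ‖f‖) fun _ =>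
      (f.le_opNorm _).trans_eq (mul_comm _ _)

theorem Metric.infDist_le_apply_sub_of_tendsto {X : Type*} [NormedAddCommGroup X]
    [NormedSpace ℝ X] {C : Set X} {x z : X} {f : StrongDual ℝ X} (hf : ‖f‖ ≤ 1)
    (hΩ : ∀ ε > (0 : ℝ), ∃ δ > (0 : ℝ),
      sInf ((fun z => f (x - z)) '' (C ∩ closedBall x (infDist x C + δ))) > (1 - ε) * infDist x C)
    {y : ℕ → X} (hyC : ∀ k, y k ∈ C)
    (hy : Tendsto (fun k => dist x (y k)) atTop (𝓝 (infDist x C)))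
    (hyz : Tendsto (fun k => f (y k)) atTop (𝓝 (f z))) : infDist x C ≤ f (x - z) := by
  set d := infDist x C
  have hlower (ε : ℝ) (hε : 0 < ε) : (1 - ε) * d ≤ f (x - z) := by
    obtain ⟨δ, hδ, hinf⟩ := hΩ ε hε
    have hbdd : BddBelow ((fun z => f (x - z)) '' (C ∩ closedBall x (d + δ))) := by
      refine ⟨-(d + δ), ?_⟩
      rintro _ ⟨v, ⟨-, hv⟩, rfl⟩
      refine neg_le_of_abs_le ((f.le_of_opNorm_le hf _).trans ?_)
      rw [one_mul, ← dist_eq_norm, dist_comm]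
      exact hv
    have hev : ∀ᶠ k in atTop, (1 - ε) * d ≤ f (x - y k) := by
      filter_upwards [hy.eventually (ge_mem_nhds (lt_add_of_pos_right d hδ))] with k hk
      exact hinf.le.trans (csInf_le hbdd ⟨y k, ⟨hyC k, mem_closedBall'.2 hk⟩, rfl⟩)
    exact ge_of_tendsto (by simpa only [map_sub] using tendsto_const_nhds.sub hyz) hev
  have hε : Tendsto (fun ε : ℝ => (1 - ε) * d) (𝓝[>] 0) (𝓝 d) := by
    have hcont : Continuous fun ε : ℝ => (1 - ε) * d := by fun_prop
    exact (hcont.tendsto' 0 d (by simp)).mono_left nhdsWithin_le_nhds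
  exact le_of_tendsto hε (eventually_nhdsWithin_of_forall hlower)

theorem omegaSet_subset_nearestPoints_general
    (X : Type*) [NormedAddCommGroup X] [NormedSpace ℝ X]
    (hrefl : IsReflexiveSpace X) (hkadec : IsKadecSpace X)
    (C : Set X) (hCclosed : IsClosed C) (hCne : C.Nonempty) :
    OmegaSet C ⊆ NearestPoints C := by
  rintro x ⟨-, f, hf, hΩ⟩
  obtain ⟨y, hyC, hy⟩ := exists_seq_mem_tendsto_infDist x hCne
  have hbdd : Bornology.IsBounded (Set.range y) := by
    obtain ⟨B, hB⟩ := hy.bddAbove_range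
    exact (isBounded_closedBall (x := x) (r := B)).subset
      (Set.range_subset_iff.2 fun k => mem_closedBall'.2 (hB ⟨k, rfl⟩))
  obtain ⟨z, φ, hφ, hz⟩ := hrefl.exists_subseq_forall_tendsto_apply hbdd
  have hdist : Tendsto (fun k => ‖x - y (φ k)‖) atTop (𝓝 (infDist x C)) := by
    simpa only [Function.comp_def, dist_eq_norm] using hy.comp hφ.tendsto_atTop
  have hweak (g : StrongDual ℝ X) :
      Tendsto (fun k => g (x - y (φ k))) atTop (𝓝 (g (x - z))) := by
    simpa only [map_sub] using tendsto_const_nhds.sub (hz g)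
  have hnorm : ‖x - z‖ = infDist x C := by
    refine le_antisymm (norm_le_of_forall_tendsto_apply hweak hdist) ?_
    refine (infDist_le_apply_sub_of_tendsto hf.le hΩ (fun k => hyC (φ k))
      (hy.comp hφ.tendsto_atTop) (hz f)).trans ?_
    exact (Real.le_norm_self _).trans ((f.le_of_opNorm_le hf.le _).trans_eq (one_mul _))
  have hyz : Tendsto (fun k => y (φ k)) atTop (𝓝 z) := by
    simpa using (tendsto_const_nhds (x := x)).sub (hkadec _ _ hweak (hnorm ▸ hdist))
  exact ⟨z, hCclosed.mem_of_tendsto hyz (Eventually.of_forall fun k => hyC (φ k)), hnorm⟩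

/-- In a reflexive Kadec real Banach space, every point of `Ω(C)` has a nearest point in
the nonempty closed set `C`, i.e. `Ω(C) ⊆ N(C)`. -/
theorem omegaSet_subset_nearestPoints
    (X : Type*) [NormedAddCommGroup X] [NormedSpace ℝ X] [CompleteSpace X]
    (hrefl : IsReflexiveSpace X) (hkadec : IsKadecSpace X)
    (C : Set X) (hCclosed : IsClosed C) (hCne : C.Nonempty) :
    OmegaSet C ⊆ NearestPoints C :=
  omegaSet_subset_nearestPoints_general X hrefl hkadec C hCclosed hCne
end

section
/- Let X be a real Banach space, let f₁, …, f_k : X → ℝ be DC functions, and let f : X → ℝ be continuous with f(x) ∈ {f₁(x), …, f_k(x)} for every x ∈ X. Then f is DC. -/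
open Metric Filter Topology

/-- A function `f : X → ℝ` is DC (delta-convex) if it is the difference of two convex
functions on `X`. -/
def IsDC {X : Type*} [NormedAddCommGroup X] [NormedSpace ℝ X] (f : X → ℝ) : Prop :=
  ∃ g h : X → ℝ, ConvexOn ℝ Set.univ g ∧ ConvexOn ℝ Set.univ h ∧ ∀ x, f x = g x - h x

/-!
If `F` is a continuous selection of convex functions `u i`, then `φ + F` is convex, where
`φ = ∑ i, ∑ j, max (u i) (u j)`. Convexity can be tested on lines, so it suffices to work
on `ℝ`. There, if `φ + F` rose strictly above a chord, subtracting a linear function would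
produce a function with an interior maximum. At its largest maximizer `σ`, `F` agrees with a
single `u i` at points accumulating at `σ` from the left and with a single `u j` from the right.
Since `max + min = u i + u j`, we can write `φ + F = ρ + (F - min (u i) (u j))` with `ρ`
convex. The second summand vanishes at `σ` and is nonnegative at those points, so the left
slope of `φ + F` at `σ` is at most its right slope, which contradicts the strict maximum.

For `fᵢ = gᵢ - hᵢ`, apply this to the convex functions `fᵢ + H` and the selection `f + H`,
where `H = ∑ hⱼ`. Then `f = (φ + (f + H)) - (φ + H)`.
-/

open Set

theorem convexOn_finsetSum {𝕜 E β ι : Type*} [Semiring 𝕜] [PartialOrder 𝕜] [AddCommMonoid E]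
    [AddCommMonoid β] [PartialOrder β] [IsOrderedAddMonoid β] [Module 𝕜 E] [Module 𝕜 β]
    (t : Finset ι) {s : Set E} (hs : Convex 𝕜 s)
    {f : ι → E → β} (hf : ∀ i ∈ t, ConvexOn 𝕜 s (f i)) :
    ConvexOn 𝕜 s fun x => ∑ i ∈ t, f i x := by
  classical
  induction t using Finset.induction_on with
  | empty => simpa using convexOn_const 0 hs
  | insert i t hi ih =>
    simp only [Finset.sum_insert hi]
    exact (hf i (t.mem_insert_self i)).add
      (ih fun j hj => hf j (Finset.mem_insert_of_mem hj))

theorem convexOn_univ_of_convexOn_lineMap {𝕜 E β : Type*} [Ring 𝕜] [PartialOrder 𝕜]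
    [AddCommGroup E] [Module 𝕜 E] [AddCommMonoid β] [PartialOrder β] [SMul 𝕜 β] {f : E → β}
    (hf : ∀ x y : E, ConvexOn 𝕜 univ fun t : 𝕜 => f (AffineMap.lineMap x y t)) :
    ConvexOn 𝕜 univ f := by
  refine ⟨convex_univ, fun x _ y _ a b ha hb hab => ?_⟩
  have hline := (hf x y).2 (mem_univ 0) (mem_univ 1) ha hb hab
  rw [eq_sub_of_add_eq hab] at hline ⊢
  simpa [AffineMap.lineMap_apply_module] using hline

theorem ConvexOn.slope_add_mono_adjacent {𝕜 : Type*} [Field 𝕜] [LinearOrder 𝕜]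
    [IsStrictOrderedRing 𝕜] {s : Set 𝕜} {ρ d : 𝕜 → 𝕜} (hρ : ConvexOn 𝕜 s ρ) {a b c : 𝕜}
    (ha : a ∈ s) (hc : c ∈ s) (hab : a < b) (hbc : b < c) (hda : d b ≤ d a)
    (hdc : d b ≤ d c) :
    slope (ρ + d) a b ≤ slope (ρ + d) b c := by
  have hd_left : slope d a b ≤ 0 := (slope_nonpos_iff_of_le hab.le).2 hda
  have hd_right : 0 ≤ slope d b c := (slope_nonneg_iff_of_le hbc.le).2 hdc
  have hρ_slope : slope ρ a b ≤ slope ρ b c := by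
    simpa only [slope_def_field] using hρ.slope_mono_adjacent ha hc hab hbc
  simp only [slope_def_module, Pi.add_apply, add_sub_add_comm, smul_add] at *
  linarith

theorem slope_sub_mul_id {𝕜 : Type*} [Field 𝕜] (f : 𝕜 → 𝕜) (m : 𝕜) {a b : 𝕜} (hab : a ≠ b) :
    slope (fun x => f x - m * x) a b = slope f a b - m := by
  simp only [slope_def_field]
  field_simp [sub_ne_zero.2 hab.symm]
  ring

theorem convexOn_univ_of_frequently_slope_le {ψ : ℝ → ℝ} (hψ : Continuous ψ)
    (hslope : ∀ σ, ∃ᶠ a in 𝓝[<] σ, ∃ᶠ c in 𝓝[>] σ, slope ψ a σ ≤ slope ψ σ c) :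
    ConvexOn ℝ univ ψ := by
  refine convexOn_iff_slope_mono_adjacent.2 ⟨convex_univ, fun x y z _ _ hxy hyz => ?_⟩
  simp only [← slope_def_field]
  by_contra! hlt
  set m := (slope ψ x y + slope ψ y z) / 2 with hm
  set h : ℝ → ℝ := fun s => ψ s - m * s
  have hx : h x < h y := by
    rw [← slope_pos_iff_of_le hxy.le, slope_sub_mul_id ψ m hxy.ne]; linarith
  have hz : h z < h y := by
    rw [← slope_neg_iff_of_le hyz.le, slope_sub_mul_id ψ m hyz.ne]; linarith
  have hh : Continuous h := by fun_prop
  obtain ⟨σ₀, hσ₀, hσ₀max⟩ :=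
    isCompact_Icc.exists_isMaxOn (nonempty_Icc.2 (hxy.trans hyz).le) hh.continuousOn
  have hK : IsCompact (Icc x z ∩ h ⁻¹' {h σ₀}) :=
    isCompact_Icc.inter_right (isClosed_singleton.preimage hh)
  -- The largest maximizer, so that `h` drops strictly to its right.
  obtain ⟨σ, ⟨hσ, hσM⟩, hσgreatest⟩ := hK.exists_isGreatest ⟨σ₀, hσ₀, rfl⟩
  have hσM : h σ = h σ₀ := hσM
  have hy_le : h y ≤ h σ₀ := hσ₀max ⟨hxy.le, hyz.le⟩
  have hxσ : x < σ := hσ.1.lt_of_ne (by rintro rfl; linarith)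
  have hσz : σ < z := hσ.2.lt_of_ne (by rintro rfl; linarith)
  obtain ⟨a, ha, haσ⟩ := ((hslope σ).and_eventually (Ioo_mem_nhdsLT hxσ)).exists
  obtain ⟨c, hc, hσc⟩ := (ha.and_eventually (Ioo_mem_nhdsGT hσz)).exists
  have hca : c ∈ Icc x z := ⟨(hxσ.trans hσc.1).le, hσc.2.le⟩
  have hha : h a ≤ h σ := hσM ▸ hσ₀max ⟨haσ.1.le, (haσ.2.trans hσz).le⟩
  have hhc : h c < h σ := (hσM ▸ hσ₀max hca).lt_of_ne fun hc_eq =>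
    hσc.1.not_ge (hσgreatest ⟨hca, hc_eq.trans hσM⟩)
  have h_left := (slope_nonneg_iff_of_le haσ.2.le).2 hha
  have h_right := (slope_neg_iff_of_le hσc.1.le).2 hhc
  rw [slope_sub_mul_id ψ m haσ.2.ne] at h_left
  rw [slope_sub_mul_id ψ m hσc.1.ne] at h_right
  linarith

theorem ConvexOn.comp_lineMap {𝕜 E β : Type*} [Field 𝕜] [LinearOrder 𝕜] [AddCommGroup E]
    [Module 𝕜 E] [AddCommMonoid β] [PartialOrder β] [SMul 𝕜 β] {f : E → β}
    (hf : ConvexOn 𝕜 univ f) (x y : E) :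
    ConvexOn 𝕜 univ fun t : 𝕜 => f (AffineMap.lineMap x y t) := by
  have h := hf.comp_affineMap (AffineMap.lineMap x y)
  rwa [preimage_univ] at h

def pairwiseMaxSum {ι α : Type*} [Fintype ι] (u : ι → α → ℝ) (x : α) : ℝ :=
  ∑ p : ι × ι, max (u p.1 x) (u p.2 x)

section PairwiseMaxSum

variable {ι : Type*} [Fintype ι]

theorem convexOn_pairwiseMaxSum {E : Type*} [AddCommMonoid E] [Module ℝ E] {s : Set E}
    (hs : Convex ℝ s) {u : ι → E → ℝ} (hu : ∀ i, ConvexOn ℝ s (u i)) :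
    ConvexOn ℝ s (pairwiseMaxSum u) :=
  convexOn_finsetSum _ hs fun p _ => (hu p.1).sup (hu p.2)

theorem slope_pairwiseMaxSum_add_mono_adjacent {u : ι → ℝ → ℝ}
    (hu : ∀ i, ConvexOn ℝ univ (u i))
    {F : ℝ → ℝ} {i j : ι} {a σ c : ℝ} (haσ : a < σ) (hσc : σ < c)
    (hσi : F σ = u i σ) (hσj : F σ = u j σ) (ha : F a = u i a) (hc : F c = u j c) :
    slope (pairwiseMaxSum u + F) a σ ≤ slope (pairwiseMaxSum u + F) σ c := by
  classical
  set ρ : ℝ → ℝ := fun s =>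
    ∑ p ∈ Finset.univ.erase (i, j), max (u p.1 s) (u p.2 s) + (u i s + u j s)
  have hρ : ConvexOn ℝ univ ρ :=
    (convexOn_finsetSum _ convex_univ fun p _ => (hu p.1).sup (hu p.2)).add ((hu i).add (hu j))
  have hdecomp : pairwiseMaxSum u + F = ρ + fun s => F s - min (u i s) (u j s) := by
    funext s
    have := min_add_max (u i s) (u j s)
    rw [Pi.add_apply, Pi.add_apply, pairwiseMaxSum,
      ← Finset.add_sum_erase _ _ (Finset.mem_univ (i, j))]
    linarith
  rw [hdecomp]
  refine hρ.slope_add_mono_adjacent (mem_univ a) (mem_univ c) haσ hσc ?_ ?_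
  · simp only [← hσi, ← hσj, min_self, sub_self, ha, sub_nonneg, min_le_left]
  · simp only [← hσi, ← hσj, min_self, sub_self, hc, sub_nonneg, min_le_right]

theorem continuous_pairwiseMaxSum {α : Type*} [TopologicalSpace α] {u : ι → α → ℝ}
    (hu : ∀ i, Continuous (u i)) : Continuous (pairwiseMaxSum u) :=
  continuous_finsetSum _ fun p _ => (hu p.1).max (hu p.2)

theorem convexOn_pairwiseMaxSum_add_of_continuous_selection_real {u : ι → ℝ → ℝ}
    (hu : ∀ i, ConvexOn ℝ univ (u i)) {F : ℝ → ℝ} (hF : Continuous F)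
    (hsel : ∀ s, ∃ i, F s = u i s) :
    ConvexOn ℝ univ (pairwiseMaxSum u + F) := by
  have hu_cont i : Continuous (u i) := continuousOn_univ.1 ((hu i).continuousOn isOpen_univ)
  refine convexOn_univ_of_frequently_slope_le ((continuous_pairwiseMaxSum hu_cont).add hF)
    fun σ => ?_
  obtain ⟨i, hi⟩ : ∃ i, ∃ᶠ s in 𝓝[<] σ, F s = u i s :=
    frequently_exists.1 (Frequently.of_forall hsel)
  obtain ⟨j, hj⟩ : ∃ j, ∃ᶠ s in 𝓝[>] σ, F s = u j s :=
    frequently_exists.1 (Frequently.of_forall hsel)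
  have hσi : F σ = u i σ :=
    (isClosed_eq hF (hu_cont i)).mem_of_frequently_of_tendsto hi nhdsWithin_le_nhds
  have hσj : F σ = u j σ :=
    (isClosed_eq hF (hu_cont j)).mem_of_frequently_of_tendsto hj nhdsWithin_le_nhds
  refine (hi.and_eventually self_mem_nhdsWithin).mono fun a ⟨ha, haσ⟩ =>
    (hj.and_eventually self_mem_nhdsWithin).mono fun c ⟨hc, hσc⟩ =>
      slope_pairwiseMaxSum_add_mono_adjacent hu haσ hσc hσi hσj ha hc

theorem convexOn_pairwiseMaxSum_add_of_continuous_selection {E : Type*} [AddCommGroup E]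
    [Module ℝ E] {u : ι → E → ℝ} (hu : ∀ i, ConvexOn ℝ univ (u i)) {F : E → ℝ}
    (hF : ∀ x y : E, Continuous fun t : ℝ => F (AffineMap.lineMap x y t))
    (hsel : ∀ x, ∃ i, F x = u i x) :
    ConvexOn ℝ univ (pairwiseMaxSum u + F) :=
  convexOn_univ_of_convexOn_lineMap fun x y =>
    convexOn_pairwiseMaxSum_add_of_continuous_selection_real
      (fun i => (hu i).comp_lineMap x y) (hF x y)
      fun _ => hsel _

end PairwiseMaxSum

theorem isDC_of_continuous_selection_general
    (X : Type*) [NormedAddCommGroup X] [NormedSpace ℝ X]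
    (k : ℕ) (fs : Fin k → X → ℝ) (hfs : ∀ i, IsDC (fs i))
    (f : X → ℝ) (hf : Continuous f) (hsel : ∀ x : X, ∃ i, f x = fs i x) :
    IsDC f := by
  choose g h hg hh hgh using hfs
  set H : X → ℝ := fun x => ∑ i, h i x
  have hH : ConvexOn ℝ univ H := convexOn_finsetSum _ convex_univ fun i _ => hh i
  have hG i : ConvexOn ℝ univ fun x => fs i x + H x := by
    have hsplit :
        (fun x => fs i x + H x) = fun x => g i x + ∑ j ∈ Finset.univ.erase i, h j x := by
      funext x
      simp only [H, hgh]
      rw [← Finset.add_sum_erase _ _ (Finset.mem_univ i)]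
      ring
    rw [hsplit]
    exact (hg i).add (convexOn_finsetSum _ convex_univ fun j _ => hh j)
  have hline x y : Continuous fun t : ℝ => (f + H) (AffineMap.lineMap x y t) :=
    (hf.comp AffineMap.lineMap_continuous).add
      (continuousOn_univ.1 ((hH.comp_lineMap x y).continuousOn isOpen_univ))
  have hφ := convexOn_pairwiseMaxSum_add_of_continuous_selection hG hline fun x => by
    obtain ⟨i, hi⟩ := hsel x
    exact ⟨i, by rw [Pi.add_apply, hi]⟩
  refine ⟨_, _, hφ, (convexOn_pairwiseMaxSum convex_univ hG).add hH, fun x => ?_⟩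
  simp only [Pi.add_apply]
  ring

/-- A continuous selection of finitely many DC functions is DC. -/
theorem isDC_of_continuous_selection
    (X : Type*) [NormedAddCommGroup X] [NormedSpace ℝ X] [CompleteSpace X]
    (k : ℕ) (fs : Fin k → X → ℝ) (hfs : ∀ i, IsDC (fs i))
    (f : X → ℝ) (hf : Continuous f) (hsel : ∀ x : X, ∃ i, f x = fs i x) :
    IsDC f :=
  isDC_of_continuous_selection_general X k fs hfs f hf hsel
end

section
/- Let X be a real Hilbert space, C ⊆ X a nonempty closed set, and x₀ ∈ X\C. Then d_C is DC on the ball B(x₀, d_C(x₀)/2): there exist functions g, h defined and convex on B(x₀, d_C(x₀)/2) such that d_C(x) = g(x) − h(x) for all x ∈ B(x₀, d_C(x₀)/2). In fact one may take g(x) = (L/2)‖x‖² with L = 4/d_C(x₀) and h(x) = sup_{y∈C} [(L/2)‖x‖² − ‖x−y‖]. -/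
/-!
By the parallelogram identity, `‖x‖² / r` gains `t u ‖x₁ - x₂‖² / r` under a convex combination,
and this bounds the defect `t ‖a‖ + u ‖b‖ - ‖t a + u b‖` of the triangle inequality once
`‖a‖, ‖b‖ ≥ r`. Hence `x ↦ ‖x‖² / r - ‖x - y‖` is convex on convex sets staying at distance
`≥ r` from `y`. Points of `B(x₀, d_C(x₀)/2)` stay at distance `≥ r = d_C(x₀)/2` from `C`, and
`L/2 = 1/r`, so `h` is a supremum of convex functions; finally `g - h = d_C` because
`sup_{y ∈ C} (a - ‖x - y‖) = a - d_C(x)`.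
-/

open Metric Set

theorem ConvexOn.ciSup {E ι : Type*} [AddCommGroup E] [Module ℝ E] [Nonempty ι] {s : Set E}
    {f : ι → E → ℝ} (hf : ∀ i, ConvexOn ℝ s (f i))
    (hbdd : ∀ x ∈ s, BddAbove (range fun i => f i x)) :
    ConvexOn ℝ s fun x => ⨆ i, f i x := by
  refine ⟨(hf (Classical.arbitrary ι)).1, fun x hx y hy a b ha hb hab => ciSup_le fun i => ?_⟩
  calc f i (a • x + b • y) ≤ a • f i x + b • f i y := (hf i).2 hx hy ha hb hab
    _ ≤ a • (⨆ i, f i x) + b • ⨆ i, f i y :=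
      add_le_add (smul_le_smul_of_nonneg_left (le_ciSup (hbdd x hx) i) ha)
        (smul_le_smul_of_nonneg_left (le_ciSup (hbdd y hy) i) hb)

section InnerProductSpace

variable {E : Type*} [NormedAddCommGroup E] [InnerProductSpace ℝ E]

theorem norm_smul_add_smul_sq {t s : ℝ} (hts : t + s = 1) (x y : E) :
    ‖t • x + s • y‖ ^ 2 = t * ‖x‖ ^ 2 + s * ‖y‖ ^ 2 - t * s * ‖x - y‖ ^ 2 := by
  rw [norm_add_sq_real, norm_sub_sq_real, norm_smul, norm_smul, real_inner_smul_left,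
    real_inner_smul_right, mul_pow, mul_pow, Real.norm_eq_abs, Real.norm_eq_abs, sq_abs, sq_abs]
  obtain rfl := eq_sub_of_add_eq hts
  ring

theorem norm_smul_add_smul_defect_le {r t s : ℝ} (hr : 0 < r) (ht : 0 ≤ t) (hs : 0 ≤ s)
    (hts : t + s = 1) {a b : E} (ha : r ≤ ‖a‖) (hb : r ≤ ‖b‖) :
    t * ‖a‖ + s * ‖b‖ - ‖t • a + s • b‖ ≤ t * s * ‖a - b‖ ^ 2 / r := by
  set A := t * ‖a‖ + s * ‖b‖
  set B := ‖t • a + s • b‖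
  have hBA : B ≤ A := by
    calc B ≤ ‖t • a‖ + ‖s • b‖ := norm_add_le _ _
      _ = A := by rw [norm_smul, norm_smul, Real.norm_of_nonneg ht, Real.norm_of_nonneg hs]
  have hrA : r ≤ A := by
    calc r = t * r + s * r := by rw [← add_mul, hts, one_mul]
      _ ≤ A := add_le_add (mul_le_mul_of_nonneg_left ha ht) (mul_le_mul_of_nonneg_left hb hs)
  have hsq : A ^ 2 - B ^ 2 = t * s * ‖a - b‖ ^ 2 - t * s * (‖a‖ - ‖b‖) ^ 2 := by
    rw [norm_smul_add_smul_sq hts, norm_sub_sq_real]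
    obtain rfl := eq_sub_of_add_eq hts
    ring
  have hB : 0 ≤ B := norm_nonneg _
  rw [le_div_iff₀ hr]
  calc (A - B) * r ≤ (A - B) * (A + B) := mul_le_mul_of_nonneg_left (by linarith) (by linarith)
    _ = A ^ 2 - B ^ 2 := by ring
    _ ≤ t * s * ‖a - b‖ ^ 2 := hsq ▸ sub_le_self _ (by positivity)

theorem convexOn_inv_mul_norm_sq_sub_norm_sub {r : ℝ} (hr : 0 < r) {s : Set E} (hs : Convex ℝ s)
    {y : E} (hfar : ∀ x ∈ s, r ≤ ‖x - y‖) :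
    ConvexOn ℝ s fun x => r⁻¹ * ‖x‖ ^ 2 - ‖x - y‖ := by
  refine ⟨hs, fun x₁ hx₁ x₂ hx₂ t u ht hu htu => ?_⟩
  have hdefect := norm_smul_add_smul_defect_le hr ht hu htu (hfar x₁ hx₁) (hfar x₂ hx₂)
  have hcomb : t • (x₁ - y) + u • (x₂ - y) = t • x₁ + u • x₂ - y := by
    rw [smul_sub, smul_sub, sub_add_sub_comm, ← add_smul, htu, one_smul]
  rw [hcomb, sub_sub_sub_cancel_right, div_eq_inv_mul] at hdefect
  simp only [smul_eq_mul]
  rw [norm_smul_add_smul_sq htu]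
  linarith

end InnerProductSpace

theorem iSup_sub_norm_sub_eq_sub_infDist {E : Type*} [SeminormedAddCommGroup E] {C : Set E}
    (hC : C.Nonempty) (a : ℝ) (x : E) :
    ⨆ y : C, (a - ‖x - y‖) = a - infDist x C := by
  have := hC.to_subtype
  rw [infDist_eq_iInf, (antitone_const_tsub (c := a)).map_ciInf_of_continuousAt
    (continuous_sub_left a).continuousAt ⟨0, by rintro _ ⟨y, rfl⟩; exact dist_nonneg⟩]
  simp only [dist_eq_norm]

theorem infDist_locally_DC_hilbert_general
    (X : Type*) [NormedAddCommGroup X] [InnerProductSpace ℝ X]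
    (C : Set X) (hCclosed : IsClosed C) (hCne : C.Nonempty)
    (x₀ : X) (hx₀ : x₀ ∉ C) :
    ConvexOn ℝ (Metric.closedBall x₀ (Metric.infDist x₀ C / 2))
      (fun x : X => 4 / Metric.infDist x₀ C / 2 * ‖x‖ ^ 2) ∧
    ConvexOn ℝ (Metric.closedBall x₀ (Metric.infDist x₀ C / 2))
      (fun x : X => ⨆ y : C, (4 / Metric.infDist x₀ C / 2 * ‖x‖ ^ 2 - ‖x - (y : X)‖)) ∧
    ∀ x ∈ Metric.closedBall x₀ (Metric.infDist x₀ C / 2),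
      Metric.infDist x C = 4 / Metric.infDist x₀ C / 2 * ‖x‖ ^ 2
        - ⨆ y : C, (4 / Metric.infDist x₀ C / 2 * ‖x‖ ^ 2 - ‖x - (y : X)‖) := by
  have hd : 0 < infDist x₀ C := (hCclosed.notMem_iff_infDist_pos hCne).mp hx₀
  have hL : 4 / infDist x₀ C / 2 = (infDist x₀ C / 2)⁻¹ := by field_simp; norm_num
  have hfar : ∀ x ∈ closedBall x₀ (infDist x₀ C / 2), ∀ y ∈ C, infDist x₀ C / 2 ≤ ‖x - y‖ := by
    intro x hx y hy
    have hx₀x : infDist x₀ C ≤ infDist x C + dist x₀ x := infDist_le_infDist_add_dist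
    have hxy : infDist x C ≤ dist x y := infDist_le_dist_of_mem hy
    rw [mem_closedBall'] at hx
    rw [← dist_eq_norm]
    linarith
  have := hCne.to_subtype
  rw [hL]
  refine ⟨?_, ?_, fun x _ => by rw [iSup_sub_norm_sub_eq_sub_infDist hCne, sub_sub_cancel]⟩
  · exact ((convexOn_norm (convex_closedBall _ _)).pow (fun _ _ => norm_nonneg _) 2).smul
      (by positivity)
  · refine ConvexOn.ciSup (fun y => ?_) fun x _ => ⟨(infDist x₀ C / 2)⁻¹ * ‖x‖ ^ 2, ?_⟩
    · exact convexOn_inv_mul_norm_sq_sub_norm_sub (by positivity) (convex_closedBall _ _)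
        fun x hx => hfar x hx y y.2
    · rintro _ ⟨y, rfl⟩
      exact sub_le_self _ (norm_nonneg _)

/-- In a real Hilbert space, the distance function to a nonempty closed set `C` is DC on
the ball `B(x₀, d_C(x₀)/2)` around any `x₀ ∉ C`: with `L = 4 / d_C(x₀)`, the functions
`g(x) = (L/2)‖x‖²` and `h(x) = sup_{y ∈ C} ((L/2)‖x‖² - ‖x - y‖)` are convex on the ball
and `d_C = g - h` there. -/
theorem infDist_locally_DC_hilbert
    (X : Type*) [NormedAddCommGroup X] [InnerProductSpace ℝ X] [CompleteSpace X]
    (C : Set X) (hCclosed : IsClosed C) (hCne : C.Nonempty)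
    (x₀ : X) (hx₀ : x₀ ∉ C) :
    ConvexOn ℝ (Metric.closedBall x₀ (Metric.infDist x₀ C / 2))
      (fun x : X => 4 / Metric.infDist x₀ C / 2 * ‖x‖ ^ 2) ∧
    ConvexOn ℝ (Metric.closedBall x₀ (Metric.infDist x₀ C / 2))
      (fun x : X => ⨆ y : C, (4 / Metric.infDist x₀ C / 2 * ‖x‖ ^ 2 - ‖x - (y : X)‖)) ∧
    ∀ x ∈ Metric.closedBall x₀ (Metric.infDist x₀ C / 2),
      Metric.infDist x C = 4 / Metric.infDist x₀ C / 2 * ‖x‖ ^ 2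
        - ⨆ y : C, (4 / Metric.infDist x₀ C / 2 * ‖x‖ ^ 2 - ‖x - (y : X)‖) :=
  infDist_locally_DC_hilbert_general X C hCclosed hCne x₀ hx₀
end

section
/- Let X be a real Banach space and let {U_a}_{a∈Λ} be a family of mutually disjoint open convex subsets of X such that C = X \ ⋃_{a∈Λ} U_a is nonempty. Then for every a ∈ Λ, the distance function d_C is concave on U_a (hence d_C is locally DC on X\C). -/
/-!
If `x ∈ U a`, the open ball of radius `d_C(x)` around `x` misses `C`, which contains the
frontier of `U a`; being connected, it stays inside `U a`. Now let `z = p x + q y` and suppose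
some `c ∈ C` is closer to `z` than `r = p d_C(x) + q d_C(y)`. Shifting `x` and `y` by the
multiples `d_C(x)/r` and `d_C(y)/r` of `c - z` keeps them inside their balls, hence in `U a`,
and the same convex combination of the shifted points is `c`, so `c ∈ U a` by convexity,
which is absurd.
-/

open Function Metric Set

theorem frontier_subset_compl_iUnion_of_pairwise_disjoint {ι X : Type*} [TopologicalSpace X]
    {U : ι → Set X} (hopen : ∀ i, IsOpen (U i)) (hdisj : Pairwise (Disjoint on U)) (i : ι) :
    frontier (U i) ⊆ (⋃ j, U j)ᶜ := by
  intro p hp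
  rw [(hopen i).frontier_eq] at hp
  simp only [mem_compl_iff, mem_iUnion, not_exists]
  intro j hj
  obtain rfl | hij := eq_or_ne i j
  · exact hp.2 hj
  · exact ((hdisj hij).closure_left (hopen j)).ne_of_mem hp.1 hj rfl

section

variable {E : Type*} [SeminormedAddCommGroup E] [NormedSpace ℝ E] {U C : Set E}

theorem ball_infDist_subset_of_frontier_subset (hU : IsOpen U) (hfr : frontier U ⊆ C)
    {x : E} (hx : x ∈ U) : ball x (infDist x C) ⊆ U := by
  intro w hw
  refine (convex_ball x _).isPreconnected.subset_of_closure_inter_subset hU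
    ⟨x, mem_ball_self (pos_of_mem_ball hw), hx⟩ ?_ hw
  rintro p ⟨hpU, hpb⟩
  by_contra hp
  have hpC : p ∈ C := hfr (hU.frontier_eq ▸ ⟨hpU, hp⟩)
  exact (infDist_le_dist_of_mem hpC).not_gt (mem_ball'.1 hpb)

theorem concaveOn_infDist_of_ball_subset (hU : Convex ℝ U) (hUC : Disjoint U C)
    (hball : ∀ x ∈ U, ball x (infDist x C) ⊆ U) : ConcaveOn ℝ U (fun x => infDist x C) := by
  refine ⟨hU, fun x hx y hy p q hp hq hpq => ?_⟩
  obtain rfl | hCne := C.eq_empty_or_nonempty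
  · simp
  set z := p • x + q • y
  set r := p * infDist x C + q * infDist y C
  simp only [smul_eq_mul]
  refine (le_infDist hCne).2 fun c hc => le_of_not_gt fun hcz => ?_
  have hr : 0 < r := dist_nonneg.trans_lt hcz
  have hshift : ∀ u ∈ U, u + (infDist u C / r) • (c - z) ∈ U := by
    intro u hu
    obtain h0 | hpos := (infDist_nonneg : 0 ≤ infDist u C).eq_or_lt
    · simpa [← h0] using hu
    refine hball u hu ?_
    rw [mem_ball, dist_self_add_left, norm_smul, Real.norm_of_nonneg (by positivity),
      ← dist_eq_norm, dist_comm]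
    calc infDist u C / r * dist z c < infDist u C / r * r := by gcongr
      _ = infDist u C := div_mul_cancel₀ _ hr.ne'
  have hcomb : p • (x + (infDist x C / r) • (c - z)) + q • (y + (infDist y C / r) • (c - z))
      = c := by
    calc _ = z + (r / r) • (c - z) := by module
      _ = c := by rw [div_self hr.ne', one_smul, add_sub_cancel]
  exact hUC.ne_of_mem (hcomb ▸ hU (hshift x hx) (hshift y hy) hp hq hpq) hc rfl

end

theorem infDist_concaveOn_of_swiss_cheese_general
    (X : Type*) [NormedAddCommGroup X] [NormedSpace ℝ X]
    (Λ : Type*) (U : Λ → Set X)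
    (hopen : ∀ a, IsOpen (U a)) (hconv : ∀ a, Convex ℝ (U a))
    (hdisj : ∀ a b, a ≠ b → Disjoint (U a) (U b)) :
    ∀ a, ConcaveOn ℝ (U a) (fun x : X => Metric.infDist x (Set.univ \ ⋃ b, U b)) := by
  intro a
  rw [← compl_eq_univ_sdiff]
  refine concaveOn_infDist_of_ball_subset (hconv a)
    (disjoint_compl_right_iff_subset.2 (subset_iUnion U a)) fun x hx => ?_
  exact ball_infDist_subset_of_frontier_subset (hopen a)
    (frontier_subset_compl_iUnion_of_pairwise_disjoint hopen hdisj a) hx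

/-- If `C = X \ ⋃ a, U a` is nonempty, where the `U a` are mutually disjoint open convex
sets, then the distance function `d_C` is concave on each `U a` (hence locally DC on
`X \ C`). -/
theorem infDist_concaveOn_of_swiss_cheese
    (X : Type*) [NormedAddCommGroup X] [NormedSpace ℝ X] [CompleteSpace X]
    (Λ : Type*) (U : Λ → Set X)
    (hopen : ∀ a, IsOpen (U a)) (hconv : ∀ a, Convex ℝ (U a))
    (hdisj : ∀ a b, a ≠ b → Disjoint (U a) (U b))
    (hCne : (Set.univ \ ⋃ a, U a).Nonempty) :
    ∀ a, ConcaveOn ℝ (U a) (fun x : X => Metric.infDist x (Set.univ \ ⋃ b, U b)) :=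
  infDist_concaveOn_of_swiss_cheese_general X Λ U hopen hconv hdisj
end

section
/- Let X be a real Banach space, f₁ : X → ℝ convex, and φ₁, …, φ_m : X → ℝ continuous affine functions. Let C = {x ∈ X : f₁(x) − max_{1≤i≤m} φ_i(x) ≤ 0}, and suppose each set C_i = {x ∈ X : f₁(x) − φ_i(x) ≤ 0} is nonempty. Then C = ⋃_{i=1}^m C_i, each C_i is convex, d_C(x) = min_{1≤i≤m} d_{C_i}(x) for all x, and d_C is DC on X. -/
/-!
Writing `C_i = {f₁ ≤ φ_i}`, the set `C` is the finite union of the `C_i`, each convex as a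
sublevel set of the convex function `f₁ - φ_i`. The distance to a finite union of nonempty sets
is the minimum of the distances, and each `d_{C_i}` is convex. Finally a minimum of finitely many
convex functions `d_i` is DC: `min_i d_i = ∑_j d_j - max_i ∑_{j ≠ i} d_j`.
-/

open Metric Filter Topology

open Set

section Convexity

variable {E : Type*} [AddCommGroup E] [Module ℝ E]

theorem convexOn_finset_sum {ι : Type*} {s : Set E} (hs : Convex ℝ s) {t : Finset ι}
    {f : ι → E → ℝ} (hf : ∀ i ∈ t, ConvexOn ℝ s (f i)) :
    ConvexOn ℝ s fun x => ∑ i ∈ t, f i x := by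
  simpa only [Finset.sum_fn] using
    Finset.sum_induction f (ConvexOn ℝ s) (fun _ _ => ConvexOn.add) (convexOn_const 0 hs) hf

theorem convexOn_ciSup {ι : Type*} [Nonempty ι] {s : Set E} {f : ι → E → ℝ}
    (hf : ∀ i, ConvexOn ℝ s (f i)) (hbdd : ∀ x ∈ s, BddAbove (range fun i => f i x)) :
    ConvexOn ℝ s fun x => ⨆ i, f i x := by
  refine ⟨(hf (Classical.arbitrary ι)).1, fun x hx y hy a b ha hb hab => ciSup_le fun i => ?_⟩
  calc f i (a • x + b • y) ≤ a * f i x + b * f i y := (hf i).2 hx hy ha hb hab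
    _ ≤ a * (⨆ j, f j x) + b * (⨆ j, f j y) := by
      gcongr
      · exact le_ciSup (hbdd x hx) i
      · exact le_ciSup (hbdd y hy) i

theorem convex_setOf_sub_nonpos {f g : E → ℝ} (hf : ConvexOn ℝ univ f)
    (hg : ConcaveOn ℝ univ g) : Convex ℝ {x | f x - g x ≤ 0} := by
  simpa only [mem_univ, true_and, Pi.sub_apply] using (hf.sub hg).convex_le 0

end Convexity

theorem setOf_sub_ciSup_nonpos_eq_iUnion {α ι : Type*} [Finite ι] [Nonempty ι]
    (f : α → ℝ) (g : ι → α → ℝ) :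
    {x | f x - ⨆ i, g i x ≤ 0} = ⋃ i, {x | f x - g i x ≤ 0} := by
  ext x
  simp only [mem_ofPred_eq, mem_iUnion, sub_nonpos]
  constructor
  · intro h
    obtain ⟨i, hi⟩ := exists_eq_ciSup_of_finite (f := fun i => g i x)
    exact ⟨i, hi ▸ h⟩
  · rintro ⟨i, hi⟩
    exact hi.trans (le_ciSup (f := fun j => g j x) (finite_range _).bddAbove i)

theorem Metric.infDist_iUnion {α ι : Type*} [PseudoMetricSpace α] {s : ι → Set α}
    (hs : ∀ i, (s i).Nonempty) (x : α) :
    infDist x (⋃ i, s i) = ⨅ i, infDist x (s i) := by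
  simp only [infDist, infEDist_iUnion, ENNReal.toReal_iInf fun i => infEDist_ne_top (hs i)]

section Normed

variable {X : Type*} [NormedAddCommGroup X] [NormedSpace ℝ X]

theorem convexOn_univ_infDist {S : Set X} (hS : Convex ℝ S) :
    ConvexOn ℝ univ fun x => infDist x S := by
  rcases S.eq_empty_or_nonempty with rfl | hne
  · simpa only [infDist_empty] using convexOn_const 0 convex_univ
  refine ⟨convex_univ, fun x _ y _ a b ha hb hab => le_of_forall_pos_le_add fun ε hε => ?_⟩
  obtain ⟨u, hu, hxu⟩ := (infDist_lt_iff hne).1 (lt_add_of_pos_right (infDist x S) hε)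
  obtain ⟨v, hv, hyv⟩ := (infDist_lt_iff hne).1 (lt_add_of_pos_right (infDist y S) hε)
  calc infDist (a • x + b • y) S ≤ dist (a • x + b • y) (a • u + b • v) :=
        infDist_le_dist_of_mem (hS hu hv ha hb hab)
    _ ≤ dist (a • x) (a • u) + dist (b • y) (b • v) := dist_add_add_le _ _ _ _
    _ = a * dist x u + b * dist y v := by
        rw [dist_smul₀, dist_smul₀, Real.norm_of_nonneg ha, Real.norm_of_nonneg hb]
    _ ≤ a * (infDist x S + ε) + b * (infDist y S + ε) := by gcongr
    _ = a * infDist x S + b * infDist y S + ε := by linear_combination ε * hab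

theorem isDC_ciInf {ι : Type*} [Fintype ι] [Nonempty ι] {f : ι → X → ℝ}
    (hf : ∀ i, ConvexOn ℝ univ (f i)) : IsDC fun x => ⨅ i, f i x := by
  classical
  refine ⟨fun x => ∑ j, f j x, fun x => ⨆ i, ∑ j ∈ Finset.univ.erase i, f j x,
    convexOn_finset_sum convex_univ fun j _ => hf j,
    convexOn_ciSup (fun i => convexOn_finset_sum convex_univ fun j _ => hf j)
      fun x _ => (finite_range _).bddAbove, fun x => ?_⟩
  simp only [Finset.sum_erase_eq_sub (Finset.mem_univ _)]
  rw [← Antitone.map_ciInf_of_continuousAt (continuous_sub_left _).continuousAt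
    (fun _ _ h => sub_le_sub_left h _) (finite_range _).bddBelow]
  ring

end Normed

theorem infDist_DC_of_affine_max_representation_general
    (X : Type*) [NormedAddCommGroup X] [NormedSpace ℝ X]
    (m : ℕ) (hm : 0 < m)
    (f₁ : X → ℝ) (hf₁ : ConvexOn ℝ Set.univ f₁)
    (φ : Fin m → X → ℝ)
    (hφ : ∀ i, ∃ (ψ : X →L[ℝ] ℝ) (c : ℝ), ∀ x, φ i x = ψ x + c)
    (hCi : ∀ i, {x : X | f₁ x - φ i x ≤ 0}.Nonempty) :
    ({x : X | f₁ x - ⨆ i, φ i x ≤ 0} = ⋃ i, {x : X | f₁ x - φ i x ≤ 0}) ∧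
    (∀ i, Convex ℝ {x : X | f₁ x - φ i x ≤ 0}) ∧
    (∀ x : X, Metric.infDist x {x' : X | f₁ x' - ⨆ i, φ i x' ≤ 0}
        = ⨅ i, Metric.infDist x {x' : X | f₁ x' - φ i x' ≤ 0}) ∧
    IsDC (fun x : X => Metric.infDist x {x' : X | f₁ x' - ⨆ i, φ i x' ≤ 0}) := by
  have : Nonempty (Fin m) := Fin.pos_iff_nonempty.mp hm
  have hconv (i : Fin m) : Convex ℝ {x : X | f₁ x - φ i x ≤ 0} := by
    obtain ⟨ψ, c, hψ⟩ := hφ i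
    rw [funext hψ]
    exact convex_setOf_sub_nonpos hf₁
      ((ψ.toLinearMap.concaveOn convex_univ).add_const c)
  have hunion := setOf_sub_ciSup_nonpos_eq_iUnion f₁ φ
  have hdist (x : X) : infDist x {x' : X | f₁ x' - ⨆ i, φ i x' ≤ 0}
      = ⨅ i, infDist x {x' : X | f₁ x' - φ i x' ≤ 0} := by
    rw [hunion, infDist_iUnion hCi]
  refine ⟨hunion, hconv, hdist, ?_⟩
  simpa only [hdist] using isDC_ciInf fun i => convexOn_univ_infDist (hconv i)

/-- If `C = {x : f₁(x) - max_i φ_i(x) ≤ 0}` with `f₁` convex and the `φ_i` continuous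
affine, and the convex sets `C_i = {x : f₁(x) - φ_i(x) ≤ 0}` are nonempty, then
`C = ⋃ i, C_i`, `d_C = min_i d_{C_i}`, and `d_C` is DC on `X`. -/
theorem infDist_DC_of_affine_max_representation
    (X : Type*) [NormedAddCommGroup X] [NormedSpace ℝ X] [CompleteSpace X]
    (m : ℕ) (hm : 0 < m)
    (f₁ : X → ℝ) (hf₁ : ConvexOn ℝ Set.univ f₁)
    (φ : Fin m → X → ℝ)
    (hφ : ∀ i, ∃ (ψ : X →L[ℝ] ℝ) (c : ℝ), ∀ x, φ i x = ψ x + c)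
    (hCi : ∀ i, {x : X | f₁ x - φ i x ≤ 0}.Nonempty) :
    ({x : X | f₁ x - ⨆ i, φ i x ≤ 0} = ⋃ i, {x : X | f₁ x - φ i x ≤ 0}) ∧
    (∀ i, Convex ℝ {x : X | f₁ x - φ i x ≤ 0}) ∧
    (∀ x : X, Metric.infDist x {x' : X | f₁ x' - ⨆ i, φ i x' ≤ 0}
        = ⨅ i, Metric.infDist x {x' : X | f₁ x' - φ i x' ≤ 0}) ∧
    IsDC (fun x : X => Metric.infDist x {x' : X | f₁ x' - ⨆ i, φ i x' ≤ 0}) :=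
  infDist_DC_of_affine_max_representation_general X m hm f₁ hf₁ φ hφ hCi
end
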